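/- The IRP (CLIMB) Markov chain on B-permutations with transition rates: T_k(r) → r at rate λ_{r(k)} for 1 ≤ k ≤ B-1 (swap of positions k and k+1), and S_n(r) → r at rate λ_{r(B)} for n ∉ r (replacement at position B), satisfies detailed balance with respect to the weight function w(r) = ∏_{k=1}^B λ_{r(k)}^{B+1-k}; hence π(r) = w(r)/Σ_{r'} w(r') is a reversible invariant distribution. -/

import Mathlib

open Finset

/-- IRP (CLIMB) weight function: `w r = ∏_k λ_{r k}^{B+1-k}` (1-based), i.e.
exponent `B - k` for 0-based rank `k`. -/
noncomputable def wIRP (N B : ℕ) (lam : Fin N → ℝ) (r : Fin B → Fin N) : ℝ :=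
  ∏ k : Fin B, lam (r k) ^ (B - k.val)

/-- `r` with the entries at 0-based positions `k` and `k+1` swapped. -/
def Tswap (N B : ℕ) (k : ℕ) (r : Fin B → Fin N) : Fin B → Fin N :=
  fun l =>
    if hl : l.val = k then (if h : k + 1 < B then r ⟨k + 1, h⟩ else r l)
    else if hl' : l.val = k + 1 then r ⟨k, by have := l.isLt; omega⟩
    else r l

/-- `r` with the last (0-based position `B-1`) entry replaced by `n`. -/
def Srepl (N B : ℕ) (n : Fin N) (r : Fin B → Fin N) : Fin B → Fin N :=
  fun l => if l.val = B - 1 then n else r l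

/- The weight is a product of one factor per position, with exponents decreasing by one from
each position to the next. Swapping adjacent positions `k`, `k + 1` therefore only moves one
power of `λ` between the two objects involved, and replacing the object at the last position
(exponent `1`) only exchanges a single factor `λ`. -/

section Weight

variable {N B : ℕ} (lam : Fin N → ℝ) (r : Fin B → Fin N)

theorem wIRP_eq_mul_prod_compl_pair {i j : Fin B} (hij : i ≠ j) :
    wIRP N B lam r = lam (r i) ^ (B - i.val) * lam (r j) ^ (B - j.val) *
      ∏ k ∈ {i, j}ᶜ, lam (r k) ^ (B - k.val) := by
  rw [wIRP, ← prod_mul_prod_compl {i, j}, prod_pair hij]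

theorem wIRP_comp_swap {i j : Fin B} (hij : i ≠ j) :
    wIRP N B lam (r ∘ Equiv.swap i j) = lam (r j) ^ (B - i.val) * lam (r i) ^ (B - j.val) *
      ∏ k ∈ {i, j}ᶜ, lam (r k) ^ (B - k.val) := by
  rw [wIRP_eq_mul_prod_compl_pair lam _ hij]
  simp only [Function.comp_apply, Equiv.swap_apply_left, Equiv.swap_apply_right]
  congr 1
  refine prod_congr rfl fun k hk => ?_
  have hk : k ≠ i ∧ k ≠ j := by simpa [not_or] using hk
  rw [Equiv.swap_apply_of_ne_of_ne hk.1 hk.2]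

theorem wIRP_comp_swap_succ_mul {i j : Fin B} (hij : i.val + 1 = j.val) :
    wIRP N B lam (r ∘ Equiv.swap i j) * lam (r i) = wIRP N B lam r * lam (r j) := by
  have hne : i ≠ j := fun h => by simp [h] at hij
  have hexp : B - i.val = B - j.val + 1 := by omega
  rw [wIRP_comp_swap lam r hne, wIRP_eq_mul_prod_compl_pair lam r hne, hexp]
  ring

theorem wIRP_update_mul (i : Fin B) (n : Fin N) :
    wIRP N B lam (Function.update r i n) * lam (r i) ^ (B - i.val) =
      wIRP N B lam r * lam n ^ (B - i.val) := by
  simp only [wIRP, Fintype.prod_eq_mul_prod_compl i, Function.update_self]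
  rw [prod_congr rfl fun k hk => by rw [Function.update_of_ne (by simpa using hk)]]
  ring

end Weight

theorem Tswap_eq_comp_swap {N B k : ℕ} (r : Fin B → Fin N) (hk : k + 1 < B) :
    Tswap N B k r = r ∘ Equiv.swap ⟨k, Nat.lt_of_succ_lt hk⟩ ⟨k + 1, hk⟩ := by
  funext l
  simp only [Tswap, Function.comp_apply, Equiv.swap_apply_def, Fin.ext_iff, hk, dite_true]
  split_ifs <;> rfl

theorem Srepl_eq_update {N B : ℕ} (hB : 0 < B) (n : Fin N) (r : Fin B → Fin N) :
    Srepl N B n r = Function.update r ⟨B - 1, Nat.sub_one_lt_of_lt hB⟩ n := by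
  funext l
  simp only [Srepl, Function.update_apply, Fin.ext_iff]

/-- The IRP (CLIMB) chain satisfies detailed balance with respect to `wIRP`:
for a promotion transition `T_k(r) → r` at rate `λ_{r(k)}` (reverse rate
`λ_{r(k+1)}`), and for an insertion transition `S_n(r) → r` at rate `λ_{r(B)}`
(reverse rate `λ_n`). -/
theorem irp_detailed_balance (N B : ℕ) (hB : 0 < B)
    (lam : Fin N → ℝ) (r : Fin B → Fin N) :
    (∀ k : ℕ, (hk : k + 1 < B) →
      wIRP N B lam (Tswap N B k r) * lam (r ⟨k, by omega⟩) =
        wIRP N B lam r * lam (r ⟨k + 1, hk⟩)) ∧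
    (∀ n : Fin N, (∀ l, r l ≠ n) →
      wIRP N B lam (Srepl N B n r) * lam (r ⟨B - 1, by omega⟩) =
        wIRP N B lam r * lam n) := by
  refine ⟨fun k hk => ?_, fun n _ => ?_⟩
  · rw [Tswap_eq_comp_swap r hk]
    exact wIRP_comp_swap_succ_mul lam r rfl
  · have hlast : B - (B - 1) = 1 := by omega
    have hupdate := wIRP_update_mul lam r ⟨B - 1, by omega⟩ n
    rwa [hlast, pow_one, pow_one, ← Srepl_eq_update hB] at hupdate
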